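/- arXiv:1112.6140 — 2 statements merged into one kernel-verified Lean document; each statement's English description precedes it below -/
import Mathlib

section
/- For every graph G, γ¹_∞(G) ≤ α(G)(α(G)+1)/2, where α(G) is the independence number and γ¹_∞ the eternal 1-security number. -/
/-- `k` guards suffice for eternal 1-security of `G`: a nonempty family of
guard configurations (sets of `k` vertices), such that any attack on an
unguarded vertex `v` can be answered by moving exactly one guard along an edge
to `v`, staying within the family. -/
def Eternal1Secure {V : Type*} [DecidableEq V] (G : SimpleGraph V) (k : ℕ) : Prop :=
  ∃ 𝒮 : Set (Finset V), 𝒮.Nonempty ∧ ∀ D ∈ 𝒮, D.card = k ∧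
    ∀ v : V, v ∉ D → ∃ u ∈ D, G.Adj u v ∧ insert v (D.erase u) ∈ 𝒮

/-- The eternal 1-security number `γ¹_∞(G)`. -/
noncomputable def eternal1SecurityNumber {V : Type*} [DecidableEq V]
    (G : SimpleGraph V) : ℕ :=
  sInf {k | Eternal1Secure G k}

/-- The independence number `α(G)`. -/
noncomputable def indepNumber {V : Type*} [Fintype V] (G : SimpleGraph V) : ℕ :=
  sSup {k | ∃ s : Finset V, s.card = k ∧ ∀ u ∈ s, ∀ v ∈ s, u ≠ v → ¬ G.Adj u v}

namespace KMProof

variable {V : Type*} [Fintype V] [DecidableEq V]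

/-- `s` is an independent set of `G`. -/
def Indep (G : SimpleGraph V) (s : Finset V) : Prop :=
  ∀ u ∈ s, ∀ v ∈ s, u ≠ v → ¬ G.Adj u v

lemma Indep.subset {G : SimpleGraph V} {s t : Finset V} (h : Indep G t) (hst : s ⊆ t) :
    Indep G s := fun u hu v hv huv => h u (hst hu) v (hst hv) huv

/-- `f` is a partition of `P` into independent sets, where the slot-`i` part has
cardinality exactly `i` (or is empty).  In particular the nonempty parts have
pairwise distinct cardinalities. -/
def IsPart (G : SimpleGraph V) (P : Finset V) (f : ℕ → Finset V) : Prop :=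
  (∀ i, Indep G (f i)) ∧ (∀ i, (f i).card = i ∨ f i = ∅) ∧
    (∀ i j, i ≠ j → Disjoint (f i) (f j)) ∧
    P = (Finset.range (Fintype.card V + 2)).biUnion f

/-- `P` admits a partition into independent sets of pairwise distinct sizes. -/
def Partble (G : SimpleGraph V) (P : Finset V) : Prop := ∃ f, IsPart G P f

lemma slot_empty {G : SimpleGraph V} {P : Finset V} {f : ℕ → Finset V}
    (hf : IsPart G P f) {i : ℕ} (hi : Fintype.card V < i) : f i = ∅ := by
  rcases hf.2.1 i with h | h
  · have := Finset.card_le_univ (f i)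
    omega
  · exact h

lemma slot_sub {G : SimpleGraph V} {P : Finset V} {f : ℕ → Finset V}
    (hf : IsPart G P f) (i : ℕ) : f i ⊆ P := by
  by_cases hi : i < Fintype.card V + 2
  · rw [hf.2.2.2]
    exact Finset.subset_biUnion_of_mem f (Finset.mem_range.mpr hi)
  · rw [slot_empty hf (by omega)]
    exact Finset.empty_subset _

lemma empty_partble (G : SimpleGraph V) : Partble G (∅ : Finset V) := by
  refine ⟨fun _ => ∅, fun i => by simp [Indep], fun i => Or.inr rfl,
    fun i j _ => by simp, ?_⟩
  ext x
  simp

/-- The key surgery: remove the guards `f (r+1) \ B` (in practice just one guard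
adjacent to the attacked vertex `v`), let `v` join the slot-`r` part, which is
promoted to slot `r+1`, and put `B` in slot `r`. -/
lemma swap_part {G : SimpleGraph V} {D : Finset V} {f : ℕ → Finset V}
    (hf : IsPart G D f) {v : V} (hv : v ∉ D) (r : ℕ)
    (h1 : (f r).card = r) (h2 : ∀ u ∈ f r, ¬ G.Adj u v)
    (B : Finset V) (hB : B ⊆ f (r + 1)) (hBc : B.card = r ∨ B = ∅)
    (hrM : r + 1 < Fintype.card V + 2) :
    IsPart G (insert v (D \ (f (r + 1) \ B)))
      (Function.update (Function.update f r B) (r + 1) (insert v (f r))) := by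
  obtain ⟨hind, hcards, hdisj, hunion⟩ := hf
  have hf' : IsPart G D f := ⟨hind, hcards, hdisj, hunion⟩
  have hne : r ≠ r + 1 := by omega
  set g := Function.update (Function.update f r B) (r + 1) (insert v (f r)) with hg
  have hg_top : g (r + 1) = insert v (f r) := by simp [hg]
  have hg_r : g r = B := by simp [hg, Function.update_apply, hne]
  have hg_other : ∀ i, i ≠ r → i ≠ r + 1 → g i = f i := by
    intro i h₁ h₂
    simp [hg, Function.update_apply, h₁, h₂]
  have hvnot : ∀ i, v ∉ f i := fun i hvi => hv (slot_sub hf' i hvi)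
  -- membership characterization for g
  have mem_char : ∀ a y, y ∈ g a →
      (a = r + 1 ∧ (y = v ∨ y ∈ f r)) ∨ (a = r ∧ y ∈ f (r + 1)) ∨
        (a ≠ r ∧ a ≠ r + 1 ∧ y ∈ f a) := by
    intro a y hy
    by_cases ha1 : a = r + 1
    · rw [ha1, hg_top] at hy
      exact Or.inl ⟨ha1, Finset.mem_insert.mp hy⟩
    by_cases ha2 : a = r
    · rw [ha2, hg_r] at hy
      exact Or.inr (Or.inl ⟨ha2, hB hy⟩)
    · rw [hg_other a ha2 ha1] at hy
      exact Or.inr (Or.inr ⟨ha2, ha1, hy⟩)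
  refine ⟨?_, ?_, ?_, ?_⟩
  · -- independence
    intro i
    by_cases hi1 : i = r + 1
    · rw [hi1, hg_top]
      intro a ha b hb hab
      rcases Finset.mem_insert.mp ha with rfl | ha'
      · rcases Finset.mem_insert.mp hb with rfl | hb'
        · exact absurd rfl hab
        · intro hadj
          exact h2 b hb' hadj.symm
      · rcases Finset.mem_insert.mp hb with rfl | hb'
        · exact h2 a ha'
        · exact hind r a ha' b hb' hab
    by_cases hi2 : i = r
    · rw [hi2, hg_r]; exact (hind (r + 1)).subset hB
    · rw [hg_other i hi2 hi1]; exact hind i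
  · -- cardinalities
    intro i
    by_cases hi1 : i = r + 1
    · left
      rw [hi1, hg_top, Finset.card_insert_of_notMem (hvnot r), h1]
    by_cases hi2 : i = r
    · rw [hi2, hg_r]
      exact hBc
    · rw [hg_other i hi2 hi1]; exact hcards i
  · -- disjointness
    intro i j hij
    rw [Finset.disjoint_left]
    intro x hxi hxj
    have hx1 := mem_char i x hxi
    have hx2 := mem_char j x hxj
    rcases hx1 with ⟨hi, rfl | hxr⟩ | ⟨hi, hxr1⟩ | ⟨hi1, hi2, hxf⟩
    · -- i = r+1, x = v
      rcases hx2 with ⟨hj, hv' | hvr⟩ | ⟨hj, hvr1⟩ | ⟨hj1, hj2, hvf⟩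
      · exact hij (hi.trans hj.symm)
      · exact hvnot r hvr
      · exact hvnot (r + 1) hvr1
      · exact hvnot j hvf
    · -- i = r+1, x ∈ f r
      rcases hx2 with ⟨hj, hv' | hvr⟩ | ⟨hj, hvr1⟩ | ⟨hj1, hj2, hvf⟩
      · exact hij (hi.trans hj.symm)
      · exact hij (hi.trans hj.symm)
      · exact (Finset.disjoint_left.mp (hdisj r (r + 1) hne)) hxr hvr1
      · exact (Finset.disjoint_left.mp (hdisj r j (Ne.symm hj1))) hxr hvf
    · -- i = r, x ∈ f (r+1)
      rcases hx2 with ⟨hj, hv' | hvr⟩ | ⟨hj, hvr1⟩ | ⟨hj1, hj2, hvf⟩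
      · subst hv'
        exact hvnot (r + 1) hxr1
      · exact (Finset.disjoint_left.mp (hdisj (r + 1) r (Ne.symm hne))) hxr1 hvr
      · exact hij (hi.trans hj.symm)
      · exact (Finset.disjoint_left.mp (hdisj (r + 1) j (Ne.symm hj2))) hxr1 hvf
    · -- i ∉ {r, r+1}, x ∈ f i
      rcases hx2 with ⟨hj, hv' | hvr⟩ | ⟨hj, hvr1⟩ | ⟨hj1, hj2, hvf⟩
      · subst hv'
        exact hvnot i hxf
      · exact (Finset.disjoint_left.mp (hdisj i r hi1)) hxf hvr
      · exact (Finset.disjoint_left.mp (hdisj i (r + 1) hi2)) hxf hvr1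
      · exact (Finset.disjoint_left.mp (hdisj i j hij)) hxf hvf
  · -- union
    ext x
    simp only [Finset.mem_insert, Finset.mem_sdiff, Finset.mem_biUnion, Finset.mem_range]
    constructor
    · rintro (rfl | ⟨hxD, hxnot⟩)
      · exact ⟨r + 1, hrM, by rw [hg_top]; exact Finset.mem_insert_self _ _⟩
      · have hex : ∃ i, i < Fintype.card V + 2 ∧ x ∈ f i := by
          have hx := hunion ▸ hxD
          simpa [Finset.mem_biUnion, Finset.mem_range] using hx
        obtain ⟨i, hiM, hxi⟩ := hex
        by_cases hi1 : i = r + 1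
        · rw [hi1] at hxi
          have hxB : x ∈ B := by
            by_contra hxB
            exact hxnot ⟨hxi, hxB⟩
          exact ⟨r, by omega, by rw [hg_r]; exact hxB⟩
        by_cases hi2 : i = r
        · rw [hi2] at hxi
          exact ⟨r + 1, hrM, by rw [hg_top]; exact Finset.mem_insert_of_mem hxi⟩
        · exact ⟨i, hiM, by rw [hg_other i hi2 hi1]; exact hxi⟩
    · rintro ⟨i, hiM, hxi⟩
      by_cases hi1 : i = r + 1
      · rw [hi1, hg_top] at hxi
        rcases Finset.mem_insert.mp hxi with rfl | hxr
        · exact Or.inl rfl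
        · refine Or.inr ⟨slot_sub hf' r hxr, ?_⟩
          rintro ⟨hx1, -⟩
          exact (Finset.disjoint_left.mp (hdisj r (r + 1) hne)) hxr hx1
      by_cases hi2 : i = r
      · rw [hi2, hg_r] at hxi
        refine Or.inr ⟨slot_sub hf' (r + 1) (hB hxi), ?_⟩
        rintro ⟨-, hx2⟩
        exact hx2 hxi
      · rw [hg_other i hi2 hi1] at hxi
        refine Or.inr ⟨slot_sub hf' i hxi, ?_⟩
        rintro ⟨hx1, -⟩
        exact (Finset.disjoint_left.mp (hdisj i (r + 1) hi1)) hxi hx1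

/-- Main lemma: a maximum-cardinality partitionable set can answer any attack. -/
lemma exists_response {G : SimpleGraph V} {D : Finset V}
    (hmax : ∀ Q : Finset V, Partble G Q → Q.card ≤ D.card)
    (hD : Partble G D) {v : V} (hv : v ∉ D) :
    ∃ u ∈ D, G.Adj u v ∧ Partble G (insert v (D.erase u)) := by
  classical
  obtain ⟨f, hf⟩ := hD
  have hwit : ¬ ((f (Fintype.card V + 1)).card = Fintype.card V + 1 ∧
      ∀ u ∈ f (Fintype.card V + 1), ¬ G.Adj u v) := by
    rintro ⟨hc, -⟩
    have hle := Finset.card_le_univ (f (Fintype.card V + 1))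
    omega
  have hex : ∃ i, ¬ ((f i).card = i ∧ ∀ u ∈ f i, ¬ G.Adj u v) :=
    ⟨Fintype.card V + 1, hwit⟩
  have hNspec := Nat.find_spec hex
  have hNle : Nat.find hex ≤ Fintype.card V + 1 := Nat.find_min' hex hwit
  have hN0 : Nat.find hex ≠ 0 := by
    intro h
    rw [h] at hNspec
    apply hNspec
    have h0 : (f 0).card = 0 := by
      rcases hf.2.1 0 with h' | h'
      · exact h'
      · simp [h']
    refine ⟨h0, fun u hu => ?_⟩
    rw [Finset.card_eq_zero] at h0
    simp [h0] at hu
  obtain ⟨r, hr⟩ : ∃ r, Nat.find hex = r + 1 := ⟨Nat.find hex - 1, by omega⟩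
  have hcondr : (f r).card = r ∧ ∀ u ∈ f r, ¬ G.Adj u v :=
    not_not.mp (Nat.find_min hex (by omega))
  rw [hr] at hNspec
  have hrM : r + 1 < Fintype.card V + 2 := by omega
  by_cases hadj : ∃ u ∈ f (r + 1), G.Adj u v
  · obtain ⟨u, hu, hAdj⟩ := hadj
    have hcard : (f (r + 1)).card = r + 1 := by
      rcases hf.2.1 (r + 1) with h' | h'
      · exact h'
      · simp [h'] at hu
    refine ⟨u, slot_sub hf (r + 1) hu, hAdj, ?_⟩
    have hs := swap_part hf hv r hcondr.1 hcondr.2 ((f (r + 1)).erase u)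
      (Finset.erase_subset _ _)
      (Or.inl (by rw [Finset.card_erase_of_mem hu, hcard]; omega)) hrM
    have hset : f (r + 1) \ (f (r + 1)).erase u = {u} := by
      ext x
      simp only [Finset.mem_sdiff, Finset.mem_erase, Finset.mem_singleton, not_and]
      constructor
      · rintro ⟨hx1, hx2⟩
        by_contra hne
        exact (hx2 hne) hx1
      · rintro rfl
        exact ⟨hu, fun h => absurd rfl h⟩
    rw [hset] at hs
    rw [Finset.erase_eq]
    exact ⟨_, hs⟩
  · have hcard : (f (r + 1)).card ≠ r + 1 := by
      intro hc
      exact hNspec ⟨hc, fun u hu ha => hadj ⟨u, hu, ha⟩⟩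
    have hempty : f (r + 1) = ∅ := (hf.2.1 (r + 1)).resolve_left hcard
    have hs := swap_part hf hv r hcondr.1 hcondr.2 ∅ (Finset.empty_subset _)
      (Or.inr rfl) hrM
    rw [hempty] at hs
    simp only [Finset.empty_sdiff, Finset.sdiff_empty] at hs
    have hpart : Partble G (insert v D) := ⟨_, hs⟩
    have hle := hmax _ hpart
    rw [Finset.card_insert_of_notMem hv] at hle
    omega

end KMProof

/-- Klostermeyer–MacGillivray: `γ¹_∞(G) ≤ α(G)(α(G)+1)/2` for every graph. -/
theorem eternal1Security_le_triangle_indep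
    {V : Type*} [Fintype V] [DecidableEq V] (G : SimpleGraph V) :
    eternal1SecurityNumber G ≤ indepNumber G * (indepNumber G + 1) / 2 := by
  classical
  set S : Set ℕ := {k | ∃ P : Finset V, KMProof.Partble G P ∧ P.card = k} with hS
  have hne : S.Nonempty := ⟨0, ∅, KMProof.empty_partble G, Finset.card_empty⟩
  have hbdd : BddAbove S := by
    refine ⟨Fintype.card V, ?_⟩
    rintro k ⟨P, -, rfl⟩
    exact Finset.card_le_univ P
  obtain ⟨P₀, hP₀, hP₀card⟩ := Nat.sSup_mem hne hbdd
  -- the eternal security family: all maximum-cardinality partitionable sets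
  have hsec : Eternal1Secure G (sSup S) := by
    refine ⟨{D | KMProof.Partble G D ∧ D.card = sSup S}, ⟨P₀, hP₀, hP₀card⟩, ?_⟩
    rintro D ⟨hDp, hDc⟩
    refine ⟨hDc, fun v hv => ?_⟩
    have hmax' : ∀ Q : Finset V, KMProof.Partble G Q → Q.card ≤ D.card := by
      intro Q hQ
      rw [hDc]
      exact le_csSup hbdd ⟨Q, hQ, rfl⟩
    obtain ⟨u, hu, hAdj, hpart⟩ := KMProof.exists_response hmax' hDp hv
    refine ⟨u, hu, hAdj, hpart, ?_⟩
    have hvne : v ∉ D.erase u := fun h => hv (Finset.erase_subset _ _ h)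
    have h1 : 1 ≤ D.card := Finset.card_pos.mpr ⟨u, hu⟩
    rw [Finset.card_insert_of_notMem hvne, Finset.card_erase_of_mem hu]
    omega
  -- the cardinality bound: any partitionable set has at most α(α+1)/2 vertices
  have hb : sSup S ≤ indepNumber G * (indepNumber G + 1) / 2 := by
    rw [← hP₀card]
    obtain ⟨f, hind, hcards, hdisj, hunion⟩ := hP₀
    have hIumax : ∀ s : Finset V, KMProof.Indep G s → s.card ≤ indepNumber G := by
      intro s hs
      refine le_csSup ⟨Fintype.card V, ?_⟩ ⟨s, rfl, hs⟩
      rintro k ⟨t, rfl, -⟩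
      exact Finset.card_le_univ t
    have hαn : indepNumber G + 1 ≤ Fintype.card V + 2 := by
      have hub : ∀ k ∈ {k | ∃ s : Finset V, s.card = k ∧
          ∀ u ∈ s, ∀ v ∈ s, u ≠ v → ¬ G.Adj u v}, k ≤ Fintype.card V := by
        rintro k ⟨t, rfl, -⟩
        exact Finset.card_le_univ t
      have h : indepNumber G ≤ Fintype.card V :=
        csSup_le ⟨0, ∅, Finset.card_empty, by simp⟩ hub
      omega
    have hcard_eq : P₀.card = ∑ i ∈ Finset.range (Fintype.card V + 2), (f i).card := by
      rw [hunion]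
      exact Finset.card_biUnion (fun i _ j _ hij => hdisj i j hij)
    have hzero : ∀ i ∈ Finset.range (Fintype.card V + 2),
        i ∉ Finset.range (indepNumber G + 1) → (f i).card = 0 := by
      intro i _ hi
      rw [Finset.mem_range, not_lt] at hi
      rcases hcards i with h' | h'
      · have := hIumax (f i) (hind i)
        omega
      · simp [h']
    have hsum : ∑ i ∈ Finset.range (Fintype.card V + 2), (f i).card
        = ∑ i ∈ Finset.range (indepNumber G + 1), (f i).card :=
      (Finset.sum_subset (Finset.range_subset_range.mpr hαn) hzero).symm
    have hsum2 : ∑ i ∈ Finset.range (indepNumber G + 1), (f i).card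
        ≤ ∑ i ∈ Finset.range (indepNumber G + 1), i := by
      refine Finset.sum_le_sum fun i _ => ?_
      rcases hcards i with h' | h'
      · omega
      · simp [h']
    have hgauss : ∑ i ∈ Finset.range (indepNumber G + 1), i
        = indepNumber G * (indepNumber G + 1) / 2 := by
      rw [Finset.sum_range_id]
      simp [Nat.mul_comm]
    rw [hcard_eq, hsum, ← hgauss]
    exact hsum2
  exact le_trans (Nat.sInf_le hsec) hb
end

section
/- If in a game state of the constructed guarding game some ψ-Arnold cop occupies the vertex a'' while all other cops are in normal positions and the robber is on the basic-cycle/switch vertex set S₂, then the cop-player wins: whenever the robber moves to any vertex z'_φ (the robber-region predecessor of an entry vertex z_φ of a Robber Gate), the cop at a'' can move to z_φ, since a'' has an edge to z_φ for every clause φ of F_R. -/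
/-- A guarding game on a directed graph: edge relation `E` and cop-region `VC`. -/
structure GuardGame (W : Type*) where
  E : W → W → Prop
  VC : Set W

/-- A legal simultaneous move of the cops. -/
def CopsMove {W : Type*} (g : GuardGame W) (D D' : Finset W) : Prop :=
  ↑D' ⊆ g.VC ∧ ∃ f : D → D', Function.Bijective f ∧
    ∀ u : D, ((f u : W) = u ∨ g.E u (f u))

/-- The robber (to move, at `r`, cops on `D`) can force entering an unoccupied
cop-region vertex. -/
inductive RWin {W : Type*} (g : GuardGame W) : Finset W → W → Prop
  | enter {D : Finset W} {r v : W} : g.E r v → v ∈ g.VC → v ∉ D → RWin g D r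
  | step {D : Finset W} {r r' : W} : (g.E r r' ∨ r' = r) → r' ∉ g.VC →
      (∀ D', CopsMove g D D' → RWin g D' r') → RWin g D r

/-!
The cop waits on `a''` as long as the robber is not next to an entry vertex. As soon as the
robber steps onto a predecessor `z'` of some `z ∈ Z`, the cop moves along the edge `a'' → z`
and stays there; the only edge out of `z'` leads to the occupied `z`, so the robber can never
enter. These two kinds of positions form a trap that the robber cannot leave.
-/

namespace GuardGame

variable {W : Type*} (g : GuardGame W)

theorem copsMove_singleton {c c' : W} (hc' : c' ∈ g.VC) (hcc' : c' = c ∨ g.E c c') :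
    CopsMove g {c} {c'} := by
  refine ⟨by simpa using hc', fun _ => ⟨c', Finset.mem_singleton_self c'⟩, ?_, ?_⟩
  · constructor
    · rintro ⟨a, ha⟩ ⟨b, hb⟩ -
      rw [Finset.mem_singleton] at ha hb
      exact Subtype.ext (ha.trans hb.symm)
    · rintro ⟨y, hy⟩
      rw [Finset.mem_singleton] at hy
      exact ⟨⟨c, Finset.mem_singleton_self c⟩, Subtype.ext hy.symm⟩
  · rintro ⟨u, hu⟩
    rw [Finset.mem_singleton] at hu
    subst hu
    exact hcc'

theorem not_rWin_of_trap (S : Finset W → W → Prop)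
    (henter : ∀ D r v, S D r → g.E r v → v ∈ g.VC → v ∈ D)
    (hstep : ∀ D r r', S D r → (g.E r r' ∨ r' = r) → r' ∉ g.VC →
      ∃ D', CopsMove g D D' ∧ S D' r')
    {D : Finset W} {r : W} (hS : S D r) : ¬ RWin g D r := by
  intro hwin
  induction hwin with
  | enter hE hv hvD => exact hvD (henter _ _ _ hS hE hv)
  | step hmv hr' _ ih =>
    obtain ⟨D', hmove, hS'⟩ := hstep _ _ _ hS hmv hr'
    exact ih D' hmove hS'

def ArnoldTrap (a'' : W) (Z : Set W) (D : Finset W) (r : W) : Prop :=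
  r ∉ g.VC ∧ ((D = {a''} ∧ ∀ z ∈ Z, ¬ g.E r z) ∨ ∃ z ∈ Z, D = {z} ∧ ∀ x, g.E r x → x = z)

variable {g} {a'' : W} {Z : Set W}

theorem ArnoldTrap.mem_of_enter
    (hentry : ∀ u v, u ∉ g.VC → g.E u v → v ∈ g.VC → v ∈ Z)
    {D : Finset W} {r v : W} (hS : g.ArnoldTrap a'' Z D r) (hE : g.E r v) (hv : v ∈ g.VC) :
    v ∈ D := by
  obtain ⟨hr, ⟨-, hrZ⟩ | ⟨z, -, rfl, hout⟩⟩ := hS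
  · exact absurd hE (hrZ v (hentry r v hr hE hv))
  · exact Finset.mem_singleton.mpr (hout v hE)

theorem ArnoldTrap.exists_copsMove (ha : a'' ∈ g.VC) (hZC : Z ⊆ g.VC)
    (haZ : ∀ z ∈ Z, g.E a'' z)
    (hpred : ∀ z ∈ Z, ∀ u, u ∉ g.VC → g.E u z → ∀ x, g.E u x → x = z)
    {D : Finset W} {r r' : W} (hS : g.ArnoldTrap a'' Z D r) (hmv : g.E r r' ∨ r' = r)
    (hr' : r' ∉ g.VC) : ∃ D', CopsMove g D D' ∧ g.ArnoldTrap a'' Z D' r' := by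
  obtain ⟨-, ⟨rfl, -⟩ | ⟨z, hz, rfl, hout⟩⟩ := hS
  · by_cases hadj : ∃ z ∈ Z, g.E r' z
    · obtain ⟨z, hz, hEz⟩ := hadj
      exact ⟨{z}, copsMove_singleton g (hZC hz) (.inr (haZ z hz)),
        hr', .inr ⟨z, hz, rfl, hpred z hz r' hr' hEz⟩⟩
    · push Not at hadj
      exact ⟨{a''}, copsMove_singleton g ha (.inl rfl), hr', .inl ⟨rfl, hadj⟩⟩
  · -- the robber cannot step onto `z ∈ VC`, so he passes
    obtain rfl : r' = r := hmv.resolve_left fun hE => hr' (hout r' hE ▸ hZC hz)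
    exact ⟨{z}, copsMove_singleton g (hZC hz) (.inl rfl), hr', .inr ⟨z, hz, rfl, hout⟩⟩

end GuardGame

theorem arnold_blocks_gates_general {W : Type*} (g : GuardGame W)
    (a'' : W) (Z : Set W)
    (ha : a'' ∈ g.VC) (hZC : Z ⊆ g.VC)
    (haZ : ∀ z ∈ Z, g.E a'' z)
    (hentry : ∀ u v, u ∉ g.VC → g.E u v → v ∈ g.VC → v ∈ Z)
    (hpred : ∀ z ∈ Z, ∀ u, u ∉ g.VC → g.E u z → ∀ x, g.E u x → x = z)
    (r : W) (hr : r ∉ g.VC) (hrZ : ∀ z ∈ Z, ¬ g.E r z) :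
    ¬ RWin g {a''} r :=
  g.not_rWin_of_trap (g.ArnoldTrap a'' Z)
    (fun _ _ _ hS => hS.mem_of_enter hentry)
    (fun _ _ _ hS => hS.exists_copsMove ha hZC haZ hpred)
    ⟨hr, .inl ⟨rfl, hrZ⟩⟩

/-- The Arnold-at-`a''` winning position: a single cop sits on the vertex `a''`
of the cop-region, which has a directed edge to every entry vertex `z ∈ Z`
(the entry vertices `z_φ` of the Robber Gates, one for each clause `φ` of
`F_R`); the robber can enter the cop-region only through `Z`; and every
robber-region in-neighbour `z'` of an entry vertex (the predecessor `z'_φ`)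
has that entry vertex as its unique out-neighbour. If the robber starts at a
robber-region vertex `r` not adjacent to any entry vertex, the cop at `a''`
prevents the robber from ever entering the cop-region: the robber cannot win. -/
theorem arnold_blocks_gates {W : Type*} [DecidableEq W] (g : GuardGame W)
    (a'' : W) (Z : Set W)
    (ha : a'' ∈ g.VC) (hZC : Z ⊆ g.VC)
    (haZ : ∀ z ∈ Z, g.E a'' z)
    (hentry : ∀ u v, u ∉ g.VC → g.E u v → v ∈ g.VC → v ∈ Z)
    (hpred : ∀ z ∈ Z, ∀ u, u ∉ g.VC → g.E u z → ∀ x, g.E u x → x = z)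
    (r : W) (hr : r ∉ g.VC) (hrZ : ∀ z ∈ Z, ¬ g.E r z) :
    ¬ RWin g {a''} r :=
  arnold_blocks_gates_general g a'' Z ha hZC haZ hentry hpred r hr hrZ
end
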